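/- Let P be a slant irreducible finite Γ-colored d-complete poset with top tree T, and assume Γ is simply laced. If T contains more than one element, then there exists a unique element s ∈ T that covers more than one element in T; this element s covers exactly two elements in T and is comparable to every element of T. -/

import Mathlib

/-!
Common definitions: Dynkin diagram data, Γ-colored posets, and the coloring
properties EC, NA, AC, ICE2, UCB1, LCB1 from the paper, together with
Γ-colored d-complete and Γ-colored minuscule posets, top trees, slant
irreducibility, extensions, lower frontier censuses, and full heaps.
-/

universe u v w

variable {Γ : Type u} {P : Type v}

/-- The integers `θ a b` form a Dynkin diagram datum. -/
def DynkinDatum (θ : Γ → Γ → ℤ) : Prop :=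
  (∀ a : Γ, θ a a = 2) ∧ (∀ a b : Γ, a ≠ b → θ a b ≤ 0) ∧
    (∀ a b : Γ, a ≠ b → (θ a b = 0 ↔ θ b a = 0))

/-- Colors `a` and `b` are adjacent. -/
def AdjColor (θ : Γ → Γ → ℤ) (a b : Γ) : Prop := θ a b < 0

/-- The Dynkin diagram is simply laced. -/
def SimplyLaced (θ : Γ → Γ → ℤ) : Prop :=
  ∀ a b : Γ, a ≠ b → θ a b = 0 ∨ θ a b = -1

/-- All closed intervals are finite. -/
def LocallyFinitePoset (α : Type*) [PartialOrder α] : Prop :=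
  ∀ x y : α, (Set.Icc x y).Finite

/-- A poset is connected if it cannot be written as a disjoint union of two nonempty
subposets with no comparabilities between them. -/
def ConnectedPoset (α : Type*) [PartialOrder α] : Prop :=
  ∀ S : Set α, S.Nonempty → Sᶜ.Nonempty → ∃ x ∈ S, ∃ y ∈ Sᶜ, x ≤ y ∨ y ≤ x

section
variable [PartialOrder P]

/-- (EC) Elements with equal colors are comparable. -/
def ColoredEC (κ : P → Γ) : Prop := ∀ x y : P, κ x = κ y → x ≤ y ∨ y ≤ x

/-- (NA) Neighbors have adjacent colors. -/
def ColoredNA (θ : Γ → Γ → ℤ) (κ : P → Γ) : Prop :=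
  ∀ x y : P, x ⋖ y → AdjColor θ (κ x) (κ y)

/-- (AC) Elements with adjacent colors are comparable. -/
def ColoredAC (θ : Γ → Γ → ℤ) (κ : P → Γ) : Prop :=
  ∀ x y : P, AdjColor θ (κ x) (κ y) → x ≤ y ∨ y ≤ x

/-- (ICE2) Between consecutive elements of a color `a`, the census of colors
adjacent to `a` is two. -/
def ColoredICE2 (θ : Γ → Γ → ℤ) (κ : P → Γ) : Prop :=
  ∀ (a : Γ) (x y : P), κ x = a → κ y = a → x < y → (∀ z ∈ Set.Ioo x y, κ z ≠ a) →
    (∑ᶠ z ∈ Set.Ioo x y, -θ (κ z) a) = 2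

/-- `U(x,P)`: elements above `x` with color adjacent to that of `x`. -/
def USet (θ : Γ → Γ → ℤ) (κ : P → Γ) (x : P) : Set P :=
  {y : P | x < y ∧ AdjColor θ (κ y) (κ x)}

/-- `L(x,P)`: elements below `x` with color adjacent to that of `x`. -/
def LSet (θ : Γ → Γ → ℤ) (κ : P → Γ) (x : P) : Set P :=
  {y : P | y < x ∧ AdjColor θ (κ y) (κ x)}

/-- (UCB1) Upper frontier census bound. -/
def ColoredUCB1 (θ : Γ → Γ → ℤ) (κ : P → Γ) : Prop :=
  ∀ x : P, (∀ y : P, κ y = κ x → ¬x < y) →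
    (USet θ κ x).Finite ∧ (∑ᶠ y ∈ USet θ κ x, -θ (κ y) (κ x)) ≤ 1

/-- (LCB1) Lower frontier census bound. -/
def ColoredLCB1 (θ : Γ → Γ → ℤ) (κ : P → Γ) : Prop :=
  ∀ x : P, (∀ y : P, κ y = κ x → ¬y < x) →
    (LSet θ κ x).Finite ∧ (∑ᶠ y ∈ LSet θ κ x, -θ (κ y) (κ x)) ≤ 1

/-- A Γ-colored d-complete poset: locally finite, surjectively colored, and
satisfying EC, NA, AC, ICE2, and UCB1. -/
def GColoredDComplete (θ : Γ → Γ → ℤ) (κ : P → Γ) : Prop :=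
  LocallyFinitePoset P ∧ Function.Surjective κ ∧ ColoredEC κ ∧ ColoredNA θ κ ∧
    ColoredAC θ κ ∧ ColoredICE2 θ κ ∧ ColoredUCB1 θ κ

/-- A Γ-colored minuscule poset: Γ-colored d-complete and LCB1. -/
def GColoredMinuscule (θ : Γ → Γ → ℤ) (κ : P → Γ) : Prop :=
  GColoredDComplete θ κ ∧ ColoredLCB1 θ κ

/-- The top tree: the set of elements maximal in their color class. -/
def TopTree (κ : P → Γ) : Set P := {x : P | ∀ y : P, κ y = κ x → ¬x < y}

/-- `x` is covered by `y` within the subposet `S`. -/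
def CoversIn (S : Set P) (x y : P) : Prop :=
  x ∈ S ∧ y ∈ S ∧ x < y ∧ ∀ z ∈ S, x < z → ¬z < y

/-- Slant irreducibility of a Γ-colored d-complete poset. -/
def SlantIrreducible (κ : P → Γ) : Prop :=
  ConnectedPoset P ∧ ∀ x y : P, CoversIn (TopTree κ) x y → ∃ z : P, z ≠ y ∧ κ z = κ y

/-- A saturated chain in a subposet `S`: a chain that is convex in `S`. -/
def SaturatedChainIn (S C : Set P) : Prop :=
  C ⊆ S ∧ IsChain (· ≤ ·) C ∧ ∀ x ∈ C, ∀ y ∈ C, ∀ z ∈ S, x < z → z < y → z ∈ C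

/-- The lower frontier census at the element `y`. -/
noncomputable def LCensus (θ : Γ → Γ → ℤ) (κ : P → Γ) (y : P) : ℤ :=
  ∑ᶠ x ∈ LSet θ κ y, -θ (κ x) (κ y)

/-- A full heap: locally finite, surjectively colored, EC, NA, AC, ICE2, and every
color class order-isomorphic to ℤ. -/
def FullHeap (θ : Γ → Γ → ℤ) (κ : P → Γ) : Prop :=
  LocallyFinitePoset P ∧ Function.Surjective κ ∧ ColoredEC κ ∧ ColoredNA θ κ ∧
    ColoredAC θ κ ∧ ColoredICE2 θ κ ∧ ∀ a : Γ, Nonempty ({x : P // κ x = a} ≃o ℤ)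

end

/-- `ι` realizes the colored poset `A` as an order filter of the colored poset `B`. -/
def FilterEmbedding {G : Type*} {A B : Type*} [PartialOrder A] [PartialOrder B]
    (κ : A → G) (κ' : B → G) (ι : A → B) : Prop :=
  (∀ p q : A, ι p ≤ ι q ↔ p ≤ q) ∧ (∀ p : A, κ' (ι p) = κ p) ∧ IsUpperSet (Set.range ι)

/-- `B` is an extension of `A` by the color `a`, with extending element `x`. -/
def IsExtensionBy {G : Type*} {A B : Type*} [PartialOrder A] [PartialOrder B]
    (θ : G → G → ℤ) (κ : A → G) (κ' : B → G) (a : G) (ι : A → B) (x : B) : Prop :=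
  Finite B ∧ GColoredDComplete θ κ' ∧ ConnectedPoset B ∧
    FilterEmbedding κ κ' ι ∧ (Set.range ι)ᶜ = {x} ∧ κ' x = a

/-!
Every element of the top tree `T` has at most one upper cover (UCB1) and `T` is an upper set, so
`T` is a tree rooted at the maximum of `P`, which exists since `P` is connected. If a vertex `t`
has a child, slant irreducibility gives the previous element `p` of color `κ t`. By ICE2 the
window of `t`, the elements of `(p, t)` whose colors are adjacent to `κ t`, has exactly two
elements, and it contains the children of `t`.

Existence: the colors of the window of the root are colors of its children. If there is only one
child `c`, both elements of the window have color `κ c`, the lower one is the previous element of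
`c`, and the colors of the window of `c` are again colors of children of `c`. Descending, we reach
a vertex with two children.

Uniqueness and comparability: if `u` has two children and its child `v` has a child, the window of
`v` contains the previous element of color `κ u`, whose color is not that of a child of `v`. So
`v` has only one child, and this property of the window propagates down the tree. Hence no vertex
below `u` has two children, and the join in `T` of two incomparable vertices would be a second
branching vertex above one of them.
-/

section
variable {θ : Γ → Γ → ℤ} {κ : P → Γ}

theorem AdjColor.ne (hθ : DynkinDatum θ) {a b : Γ} (h : AdjColor θ a b) : a ≠ b := by
  rintro rfl
  have := hθ.1 a
  unfold AdjColor at h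
  omega

theorem AdjColor.symm (hθ : DynkinDatum θ) {a b : Γ} (h : AdjColor θ a b) : AdjColor θ b a :=
  lt_of_le_of_ne (hθ.2.1 b a (h.ne hθ).symm) fun h0 => ne_of_lt h ((hθ.2.2 a b (h.ne hθ)).2 h0)

theorem finsum_neg_theta_eq_ncard (hθ : DynkinDatum θ) (hsl : SimplyLaced θ) {s : Set P}
    (hs : s.Finite) {a : Γ} (ha : ∀ z ∈ s, κ z ≠ a) :
    ∑ᶠ z ∈ s, -θ (κ z) a = ({z ∈ s | AdjColor θ (κ z) a}.ncard : ℤ) := by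
  have hsupp : s ∩ Function.support (fun z => -θ (κ z) a) =
      {z ∈ s | AdjColor θ (κ z) a} ∩ Function.support (fun z => -θ (κ z) a) := by
    ext z
    refine ⟨fun ⟨hz, hf⟩ => ⟨⟨hz, lt_of_le_of_ne (hθ.2.1 _ _ (ha z hz)) ?_⟩, hf⟩,
      fun ⟨⟨hz, _⟩, hf⟩ => ⟨hz, hf⟩⟩
    simpa using hf
  rw [finsum_mem_inter_support_eq _ _ _ hsupp, ← finsum_one, Nat.cast_finsum_mem (hs.sep _)]
  refine finsum_mem_congr rfl fun z hz => ?_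
  rcases hsl _ _ (ha z hz.1) with h | h
  · exact absurd h (ne_of_lt hz.2)
  · simp [h]

end

section
variable [PartialOrder P] {θ : Γ → Γ → ℤ} {κ : P → Γ}

def ColorConsecutive (κ : P → Γ) (p t : P) : Prop :=
  κ p = κ t ∧ p < t ∧ ∀ z ∈ Set.Ioo p t, κ z ≠ κ t

def adjBetween (θ : Γ → Γ → ℤ) (κ : P → Γ) (p t : P) : Set P :=
  {z ∈ Set.Ioo p t | AdjColor θ (κ z) (κ t)}

theorem ncard_adjBetween [Finite P] (hθ : DynkinDatum θ) (hsl : SimplyLaced θ)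
    (hICE2 : ColoredICE2 θ κ) {p t : P} (h : ColorConsecutive κ p t) :
    (adjBetween θ κ p t).ncard = 2 := by
  have hsum := hICE2 _ p t h.1 rfl h.2.1 h.2.2
  rw [finsum_neg_theta_eq_ncard hθ hsl (Set.toFinite _) h.2.2] at hsum
  exact_mod_cast hsum

theorem adjBetween_eq_pair [Finite P] (hθ : DynkinDatum θ) (hsl : SimplyLaced θ)
    (hICE2 : ColoredICE2 θ κ) {p t a b : P} (h : ColorConsecutive κ p t)
    (ha : a ∈ adjBetween θ κ p t) (hb : b ∈ adjBetween θ κ p t) (hab : a ≠ b) :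
    adjBetween θ κ p t = {a, b} :=
  (Set.eq_of_subset_of_ncard_le (Set.pair_subset ha hb)
    (by rw [ncard_adjBetween hθ hsl hICE2 h, Set.ncard_pair hab])).symm

theorem exists_colorConsecutive_below [Finite P] {z t : P} (hz : κ z = κ t) (hzt : z < t) :
    ∃ p, ColorConsecutive κ p t := by
  obtain ⟨p, hp⟩ := (Set.toFinite {w | κ w = κ t ∧ w < t}).exists_maximal ⟨z, hz, hzt⟩
  exact ⟨p, hp.1.1, hp.1.2, fun w hw hwc => hp.not_gt ⟨hwc, hw.2⟩ hw.1⟩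

theorem exists_colorConsecutive_above [Finite P] {u z : P} (hz : κ z = κ u) (huz : u < z) :
    ∃ q, ColorConsecutive κ u q := by
  obtain ⟨q, hq⟩ := (Set.toFinite {w | κ w = κ u ∧ u < w}).exists_minimal ⟨z, hz, huz⟩
  exact ⟨q, hq.1.1.symm, hq.1.2, fun w hw hwc => hq.not_lt ⟨hwc.trans hq.1.1, hw.1⟩ hw.2⟩

theorem mem_adjBetween_of_covBy_right (hθ : DynkinDatum θ) (hNA : ColoredNA θ κ)
    (hAC : ColoredAC θ κ) {c p t : P} (hc : c ⋖ t) (h : ColorConsecutive κ p t) :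
    c ∈ adjBetween θ κ p t := by
  have hadj := hNA c t hc
  have hne : c ≠ p := fun e => hadj.ne hθ (e ▸ h.1)
  refine ⟨⟨?_, hc.1⟩, hadj⟩
  rcases hAC c p (by rwa [h.1]) with hcp | hpc
  · exact absurd h.2.1 (hc.2 (lt_of_le_of_ne hcp hne))
  · exact lt_of_le_of_ne hpc hne.symm

theorem mem_adjBetween_of_covBy_left (hθ : DynkinDatum θ) (hNA : ColoredNA θ κ)
    (hAC : ColoredAC θ κ) {u v u' : P} (hv : u ⋖ v) (h : ColorConsecutive κ u u') :
    v ∈ adjBetween θ κ u u' := by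
  have hadj : AdjColor θ (κ v) (κ u') := h.1 ▸ (hNA u v hv).symm hθ
  have hne : v ≠ u' := fun e => hadj.ne hθ (congrArg κ e)
  refine ⟨⟨hv.1, ?_⟩, hadj⟩
  rcases hAC v u' hadj with hvu | hvu
  · exact lt_of_le_of_ne hvu hne
  · exact absurd (lt_of_le_of_ne hvu hne.symm) (hv.2 h.2.1)

theorem CovBy.covBy_of_colorConsecutive [Finite P] (hθ : DynkinDatum θ) (hsl : SimplyLaced θ)
    (hNA : ColoredNA θ κ) (hAC : ColoredAC θ κ) (hICE2 : ColoredICE2 θ κ) {u d w u' : P}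
    (hd : u ⋖ d) (hw : u ⋖ w) (hdw : d ≠ w) (h : ColorConsecutive κ u u') : w ⋖ u' := by
  have hwW := mem_adjBetween_of_covBy_left hθ hNA hAC hw h
  obtain ⟨f, hwf, hfu'⟩ := exists_le_covBy_of_lt hwW.1.2
  have hfW : f ∈ adjBetween θ κ u u' := ⟨⟨hw.1.trans_le hwf, hfu'.1⟩, hNA f u' hfu'⟩
  rw [adjBetween_eq_pair hθ hsl hICE2 h (mem_adjBetween_of_covBy_left hθ hNA hAC hd h) hwW hdw]
    at hfW
  rcases hfW with rfl | rfl
  · exact absurd (hwf.eq_of_not_lt (hd.2 hw.1)) hdw.symm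
  · exact hfu'

theorem TopTree.eq_of_color_eq (hEC : ColoredEC κ) {s t : P} (hs : s ∈ TopTree κ)
    (ht : t ∈ TopTree κ) (h : κ s = κ t) : s = t :=
  (hEC s t h).elim (fun hst => hst.eq_of_not_lt (hs t h.symm))
    fun hts => (hts.eq_of_not_lt (ht s h)).symm

theorem TopTree.lt_of_color_eq (hEC : ColoredEC κ) {z t : P} (ht : t ∈ TopTree κ)
    (h : κ z = κ t) (hne : z ≠ t) : z < t :=
  (hEC z t h).elim (fun hzt => lt_of_le_of_ne hzt hne)
    fun htz => absurd (lt_of_le_of_ne htz hne.symm) (ht z h)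

theorem TopTree.exists_color_eq [Finite P] (hsur : Function.Surjective κ) (a : Γ) :
    ∃ t ∈ TopTree κ, κ t = a := by
  obtain ⟨x, rfl⟩ := hsur a
  obtain ⟨t, ht⟩ := (Set.toFinite {y | κ y = κ x}).exists_maximal ⟨x, rfl⟩
  exact ⟨t, fun y hy => ht.not_gt (hy.trans ht.1), ht.1⟩

theorem TopTree.USet_subsingleton (hθ : DynkinDatum θ) (hsl : SimplyLaced θ)
    (hU : ColoredUCB1 θ κ) {t : P} (ht : t ∈ TopTree κ) : (USet θ κ t).Subsingleton := by
  obtain ⟨hfin, hle⟩ := hU t ht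
  rw [finsum_neg_theta_eq_ncard hθ hsl hfin fun y hy => hy.2.ne hθ,
    Set.sep_eq_self_iff_mem_true.mpr fun y hy => hy.2] at hle
  have : Finite (USet θ κ t) := hfin
  exact Set.ncard_le_one_iff_subsingleton.mp (by exact_mod_cast hle)

theorem TopTree.covBy_of_lt [Finite P] (hθ : DynkinDatum θ) (hsl : SimplyLaced θ)
    (hNA : ColoredNA θ κ) (hU : ColoredUCB1 θ κ) {t y : P} (ht : t ∈ TopTree κ) (hty : t < y)
    (hadj : AdjColor θ (κ y) (κ t)) : t ⋖ y := by
  obtain ⟨e, hte, hey⟩ := exists_covBy_le_of_lt hty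
  rwa [TopTree.USet_subsingleton hθ hsl hU ht ⟨hte.1, (hNA t e hte).symm hθ⟩ ⟨hty, hadj⟩] at hte

theorem TopTree.eq_of_covBy (hθ : DynkinDatum θ) (hsl : SimplyLaced θ) (hNA : ColoredNA θ κ)
    (hU : ColoredUCB1 θ κ) {t d d' : P} (ht : t ∈ TopTree κ) (hd : t ⋖ d) (hd' : t ⋖ d') :
    d = d' :=
  TopTree.USet_subsingleton hθ hsl hU ht ⟨hd.1, (hNA t d hd).symm hθ⟩ ⟨hd'.1, (hNA t d' hd').symm hθ⟩

theorem TopTree.mem_of_covBy (hθ : DynkinDatum θ) (hsl : SimplyLaced θ) (hNA : ColoredNA θ κ)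
    (hU : ColoredUCB1 θ κ) {t d : P} (ht : t ∈ TopTree κ) (hd : t ⋖ d) : d ∈ TopTree κ := by
  intro y hy hdy
  have hdU : d ∈ USet θ κ t := ⟨hd.1, (hNA t d hd).symm hθ⟩
  exact hdy.ne (TopTree.USet_subsingleton hθ hsl hU ht hdU ⟨hd.1.trans hdy, hy ▸ hdU.2⟩)

theorem TopTree.isUpperSet [Finite P] (hθ : DynkinDatum θ) (hsl : SimplyLaced θ)
    (hNA : ColoredNA θ κ) (hU : ColoredUCB1 θ κ) : IsUpperSet (TopTree κ) := by
  intro s y hsy hs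
  induction s using WellFoundedGT.induction with
  | _ s ih =>
    obtain rfl | hsy := hsy.eq_or_lt
    · exact hs
    obtain ⟨d, hsd, hdy⟩ := exists_covBy_le_of_lt hsy
    exact ih d hsd.1 hdy (TopTree.mem_of_covBy hθ hsl hNA hU hs hsd)

theorem TopTree.covBy_or_covBy_of_adj [Finite P] (hθ : DynkinDatum θ) (hsl : SimplyLaced θ)
    (hNA : ColoredNA θ κ) (hAC : ColoredAC θ κ) (hU : ColoredUCB1 θ κ) {s t : P}
    (hs : s ∈ TopTree κ) (ht : t ∈ TopTree κ) (hadj : AdjColor θ (κ s) (κ t)) :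
    s ⋖ t ∨ t ⋖ s := by
  have hne : s ≠ t := fun e => hadj.ne hθ (congrArg κ e)
  rcases hAC s t hadj with hst | hts
  · exact .inl (TopTree.covBy_of_lt hθ hsl hNA hU hs (lt_of_le_of_ne hst hne) (hadj.symm hθ))
  · exact .inr (TopTree.covBy_of_lt hθ hsl hNA hU ht (lt_of_le_of_ne hts hne.symm) hadj)

def topChildren (κ : P → Γ) (t : P) : Set P := {c | c ∈ TopTree κ ∧ c ⋖ t}

theorem setOf_coversIn_topTree_eq [Finite P] (hθ : DynkinDatum θ) (hsl : SimplyLaced θ)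
    (hNA : ColoredNA θ κ) (hU : ColoredUCB1 θ κ) (t : P) :
    {c | CoversIn (TopTree κ) c t} = topChildren κ t := by
  ext c
  constructor
  · rintro ⟨hc, -, hct, hmin⟩
    obtain ⟨d, hcd, hdt⟩ := exists_covBy_le_of_lt hct
    have hdT := TopTree.mem_of_covBy hθ hsl hNA hU hc hcd
    exact ⟨hc, hdt.eq_of_not_lt (hmin d hdT hcd.1) ▸ hcd⟩
  · rintro ⟨hc, hct⟩
    exact ⟨hc, TopTree.mem_of_covBy hθ hsl hNA hU hc hct, hct.1, fun z _ hcz => hct.2 hcz⟩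

theorem mem_topTree_of_topChildren_nonempty (hθ : DynkinDatum θ) (hsl : SimplyLaced θ)
    (hNA : ColoredNA θ κ) (hU : ColoredUCB1 θ κ) {t : P} (h : (topChildren κ t).Nonempty) :
    t ∈ TopTree κ :=
  let ⟨_, hc, hct⟩ := h
  TopTree.mem_of_covBy hθ hsl hNA hU hc hct

theorem exists_mem_topChildren_ge [Finite P] (hθ : DynkinDatum θ) (hsl : SimplyLaced θ)
    (hNA : ColoredNA θ κ) (hU : ColoredUCB1 θ κ) {s t : P} (hs : s ∈ TopTree κ) (hst : s < t) :
    ∃ u ∈ topChildren κ t, s ≤ u := by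
  obtain ⟨u, hsu, hut⟩ := exists_le_covBy_of_lt hst
  exact ⟨u, ⟨TopTree.isUpperSet hθ hsl hNA hU hsu hs, hut⟩, hsu⟩

theorem topChildren_nonempty_of_le [Finite P] (hθ : DynkinDatum θ) (hsl : SimplyLaced θ)
    (hNA : ColoredNA θ κ) (hU : ColoredUCB1 θ κ) {s t : P} (hs : (topChildren κ s).Nonempty)
    (hst : s ≤ t) : (topChildren κ t).Nonempty := by
  obtain rfl | hst := hst.eq_or_lt
  · exact hs
  obtain ⟨u, hu, -⟩ := exists_mem_topChildren_ge hθ hsl hNA hU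
    (mem_topTree_of_topChildren_nonempty hθ hsl hNA hU hs) hst
  exact ⟨u, hu⟩

theorem exists_colorConsecutive_of_mem_topChildren [Finite P] (hθ : DynkinDatum θ)
    (hsl : SimplyLaced θ) (hEC : ColoredEC κ) (hNA : ColoredNA θ κ) (hU : ColoredUCB1 θ κ)
    (hsi : SlantIrreducible κ) {c t : P} (hc : c ∈ topChildren κ t) :
    ∃ p, ColorConsecutive κ p t := by
  have ht := TopTree.mem_of_covBy hθ hsl hNA hU hc.1 hc.2
  obtain ⟨z, hzt, hz⟩ := hsi.2 c t ⟨hc.1, ht, hc.2.1, fun _ _ hcz => hc.2.2 hcz⟩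
  exact exists_colorConsecutive_below hz (TopTree.lt_of_color_eq hEC ht hz hzt)

theorem isUpperSet_Iic_of_isMax [Finite P] (hθ : DynkinDatum θ) (hsl : SimplyLaced θ)
    (hdc : GColoredDComplete θ κ) {m : P} (hm : IsMax m) : IsUpperSet (Set.Iic m) := by
  obtain ⟨-, -, -, hNA, hAC, hICE2, hU⟩ := hdc
  intro u v huv hum
  -- Downward induction on `u`. An upper cover `d` of `u` other than the cover `w ≤ m` exists only
  -- if `u ∉ T`; then `w` is covered by the next element `u'` of color `κ u`, and `d < u' ≤ m`.
  induction u using WellFoundedGT.induction generalizing v with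
  | _ u ih =>
    obtain rfl | huv := huv.eq_or_lt
    · exact hum
    obtain ⟨d, hud, hdv⟩ := exists_covBy_le_of_lt huv
    refine ih d hud.1 hdv ?_
    obtain ⟨w, huw, hwm⟩ := exists_covBy_le_of_lt (lt_of_le_of_ne hum fun e => hm.not_lt (e ▸ huv))
    obtain rfl | hdw := eq_or_ne d w
    · exact hwm
    by_cases hu : u ∈ TopTree κ
    · exact absurd (TopTree.eq_of_covBy hθ hsl hNA hU hu hud huw) hdw
    obtain ⟨y, hy, huy⟩ : ∃ y, κ y = κ u ∧ u < y := by simpa [TopTree] using hu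
    obtain ⟨u', hu'⟩ := exists_colorConsecutive_above hy huy
    have hwu' := hud.covBy_of_colorConsecutive hθ hsl hNA hAC hICE2 huw hdw hu'
    exact (mem_adjBetween_of_covBy_left hθ hNA hAC hud hu').1.2.le.trans
      (ih w huw.1 hwu'.1.le hwm)

theorem exists_forall_le [Finite P] [Nonempty P] (hθ : DynkinDatum θ) (hsl : SimplyLaced θ)
    (hdc : GColoredDComplete θ κ) (hconn : ConnectedPoset P) : ∃ m : P, ∀ x, x ≤ m := by
  obtain ⟨m, hm⟩ := (Set.toFinite (Set.univ : Set P)).exists_maximal Set.univ_nonempty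
  have hm : IsMax m := fun y hmy => hm.2 (Set.mem_univ y) hmy
  refine ⟨m, fun x => ?_⟩
  by_contra hx
  obtain ⟨a, ha, b, hb, hab⟩ := hconn (Set.Iic m) ⟨m, le_rfl⟩ ⟨x, hx⟩
  exact hb (hab.elim (fun hab => isUpperSet_Iic_of_isMax hθ hsl hdc hm hab ha)
    fun hba => hba.trans ha)

theorem exists_colorConsecutive_of_topChildren_subsingleton [Finite P] (hθ : DynkinDatum θ)
    (hsl : SimplyLaced θ) (hdc : GColoredDComplete θ κ) {p t : P} (hp : ColorConsecutive κ p t)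
    (hcol : κ '' adjBetween θ κ p t ⊆ κ '' topChildren κ t)
    (hsub : (topChildren κ t).Subsingleton) :
    ∃ c ∈ topChildren κ t, ∃ g, ColorConsecutive κ g c ∧
      κ '' adjBetween θ κ g c ⊆ κ '' topChildren κ c := by
  obtain ⟨-, hsur, hEC, hNA, hAC, hICE2, hU⟩ := hdc
  have hW := ncard_adjBetween hθ hsl hICE2 hp
  obtain ⟨z, hz⟩ := Set.nonempty_of_ncard_ne_zero (by omega : (adjBetween θ κ p t).ncard ≠ 0)
  obtain ⟨c, hc, -⟩ := hcol ⟨z, hz, rfl⟩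
  obtain ⟨g, hg, hgc⟩ := Set.exists_ne_of_one_lt_ncard (s := adjBetween θ κ p t) (by omega) c
  obtain ⟨c', hc', hc'g⟩ := hcol ⟨g, hg, rfl⟩
  have hgcol : κ g = κ c := hc'g.symm.trans (congrArg κ (hsub hc' hc))
  have hcW := mem_adjBetween_of_covBy_right hθ hNA hAC hc.2 hp
  have hpair := adjBetween_eq_pair hθ hsl hICE2 hp hcW hg hgc.symm
  refine ⟨c, hc, g, ⟨hgcol, TopTree.lt_of_color_eq hEC hc.1 hgcol hgc, fun w hw hwc => ?_⟩, ?_⟩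
  · have hwW : w ∈ adjBetween θ κ p t := ⟨⟨hg.1.1.trans hw.1, hw.2.trans hc.2.1⟩, hwc ▸ hcW.2⟩
    rw [hpair] at hwW
    rcases hwW with rfl | rfl
    exacts [hw.2.ne rfl, hw.1.ne rfl]
  · rintro _ ⟨z, hz, rfl⟩
    obtain ⟨tz, htz, htzc⟩ := TopTree.exists_color_eq hsur (κ z)
    rcases TopTree.covBy_or_covBy_of_adj hθ hsl hNA hAC hU htz hc.1 (htzc ▸ hz.2) with h | h
    · exact ⟨tz, ⟨htz, h⟩, htzc⟩
    · have htzt := TopTree.eq_of_covBy hθ hsl hNA hU hc.1 h hc.2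
      exact absurd (htzc.symm.trans (congrArg κ htzt))
        (hp.2.2 z ⟨hg.1.1.trans hz.1.1, hz.1.2.trans hc.2.1⟩)

theorem exists_topChildren_nontrivial_of_colors_subset [Finite P] (hθ : DynkinDatum θ)
    (hsl : SimplyLaced θ) (hdc : GColoredDComplete θ κ) {p t : P} (hp : ColorConsecutive κ p t)
    (hcol : κ '' adjBetween θ κ p t ⊆ κ '' topChildren κ t) :
    ∃ s, (topChildren κ s).Nontrivial := by
  induction t using WellFoundedLT.induction generalizing p with
  | _ t ih =>
    rcases (topChildren κ t).subsingleton_or_nontrivial with hsub | hnt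
    · obtain ⟨c, hc, g, hg, hcol'⟩ :=
        exists_colorConsecutive_of_topChildren_subsingleton hθ hsl hdc hp hcol hsub
      exact ih c hc.2.1 hg hcol'
    · exact ⟨t, hnt⟩

def HasForeignNeighbor (θ : Γ → Γ → ℤ) (κ : P → Γ) (v : P) : Prop :=
  ∃ q y, ColorConsecutive κ q v ∧ y ∈ adjBetween θ κ q v ∧ κ y ∉ κ '' topChildren κ v

theorem HasForeignNeighbor.topChildren_subsingleton [Finite P] (hθ : DynkinDatum θ)
    (hsl : SimplyLaced θ) (hNA : ColoredNA θ κ) (hAC : ColoredAC θ κ) (hICE2 : ColoredICE2 θ κ)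
    {v : P} (h : HasForeignNeighbor θ κ v) : (topChildren κ v).Subsingleton := by
  obtain ⟨q, y, hq, hy, hyc⟩ := h
  intro c₁ hc₁ c₂ hc₂
  by_contra hne
  rw [adjBetween_eq_pair hθ hsl hICE2 hq (mem_adjBetween_of_covBy_right hθ hNA hAC hc₁.2 hq)
    (mem_adjBetween_of_covBy_right hθ hNA hAC hc₂.2 hq) hne] at hy
  rcases hy with rfl | rfl
  exacts [hyc ⟨y, hc₁, rfl⟩, hyc ⟨y, hc₂, rfl⟩]

theorem hasForeignNeighbor_of_forall_color_eq [Finite P] (hθ : DynkinDatum θ)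
    (hsl : SimplyLaced θ) (hdc : GColoredDComplete θ κ) (hsi : SlantIrreducible κ) {p t v : P}
    (hv : v ∈ topChildren κ t) (hp : ColorConsecutive κ p t) (hvc : (topChildren κ v).Nonempty)
    (hsole : ∀ w ∈ adjBetween θ κ p t, κ w = κ v → w = v) : HasForeignNeighbor θ κ v := by
  have ⟨_, _, hEC, hNA, hAC, _, hU⟩ := hdc
  obtain ⟨q, hq⟩ := exists_colorConsecutive_of_mem_topChildren hθ hsl hEC hNA hU hsi hvc.some_mem
  have hvW := mem_adjBetween_of_covBy_right hθ hNA hAC hv.2 hp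
  have hadj : AdjColor θ (κ p) (κ v) := hp.1 ▸ hvW.2.symm hθ
  have hqp : q ≠ p := fun e => hadj.ne hθ (e ▸ hq.1)
  have hqp : q < p := by
    rcases hAC q p (hq.1 ▸ hadj.symm hθ) with h | h
    · exact lt_of_le_of_ne h hqp
    · exact absurd (hsole q ⟨⟨lt_of_le_of_ne h hqp.symm, hq.2.1.trans hv.2.1⟩, hq.1 ▸ hvW.2⟩ hq.1)
        hq.2.1.ne
  -- the foreign neighbor of `v` is `p`: its color is that of the parent `t`
  refine ⟨q, p, hq, ⟨⟨hqp, hvW.1.1⟩, hadj⟩, ?_⟩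
  rintro ⟨c, hc, hcp⟩
  have hct := TopTree.eq_of_color_eq hEC hc.1 (TopTree.mem_of_covBy hθ hsl hNA hU hv.1 hv.2)
    (hcp.trans hp.1)
  exact (hc.2.1.trans hv.2.1).ne hct

theorem HasForeignNeighbor.of_mem_topChildren [Finite P] (hθ : DynkinDatum θ)
    (hsl : SimplyLaced θ) (hdc : GColoredDComplete θ κ) (hsi : SlantIrreducible κ) {t v : P}
    (h : HasForeignNeighbor θ κ t) (hv : v ∈ topChildren κ t)
    (hvc : (topChildren κ v).Nonempty) : HasForeignNeighbor θ κ v := by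
  have ⟨_, _, _, hNA, hAC, hICE2, _⟩ := hdc
  obtain ⟨p, y, hp, hy, hyc⟩ := h
  have hvW := mem_adjBetween_of_covBy_right hθ hNA hAC hv.2 hp
  have hyv : y ≠ v := fun e => hyc ⟨v, hv, congrArg κ e.symm⟩
  refine hasForeignNeighbor_of_forall_color_eq hθ hsl hdc hsi hv hp hvc fun w hw hwv => ?_
  rw [adjBetween_eq_pair hθ hsl hICE2 hp hvW hy hyv.symm] at hw
  rcases hw with rfl | rfl
  · rfl
  · exact absurd ⟨v, hv, hwv.symm⟩ hyc

theorem hasForeignNeighbor_of_topChildren_nontrivial [Finite P] (hθ : DynkinDatum θ)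
    (hsl : SimplyLaced θ) (hdc : GColoredDComplete θ κ) (hsi : SlantIrreducible κ) {u v : P}
    (hu : (topChildren κ u).Nontrivial) (hv : v ∈ topChildren κ u)
    (hvc : (topChildren κ v).Nonempty) : HasForeignNeighbor θ κ v := by
  have ⟨_, _, hEC, hNA, hAC, hICE2, hU⟩ := hdc
  obtain ⟨c₁, hc₁, c₂, hc₂, hne⟩ := hu
  obtain ⟨p, hp⟩ := exists_colorConsecutive_of_mem_topChildren hθ hsl hEC hNA hU hsi hc₁
  refine hasForeignNeighbor_of_forall_color_eq hθ hsl hdc hsi hv hp hvc fun w hw hwv => ?_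
  rw [adjBetween_eq_pair hθ hsl hICE2 hp (mem_adjBetween_of_covBy_right hθ hNA hAC hc₁.2 hp)
    (mem_adjBetween_of_covBy_right hθ hNA hAC hc₂.2 hp) hne] at hw
  have hwT : w ∈ TopTree κ := by
    rcases hw with rfl | rfl
    exacts [hc₁.1, hc₂.1]
  exact TopTree.eq_of_color_eq hEC hwT hv.1 hwv

theorem HasForeignNeighbor.topChildren_subsingleton_of_le [Finite P] (hθ : DynkinDatum θ)
    (hsl : SimplyLaced θ) (hdc : GColoredDComplete θ κ) (hsi : SlantIrreducible κ) {s t : P}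
    (h : HasForeignNeighbor θ κ t) (hst : s ≤ t) : (topChildren κ s).Subsingleton := by
  have ⟨_, _, _, hNA, hAC, hICE2, hU⟩ := hdc
  induction t using WellFoundedLT.induction with
  | _ t ih =>
    rw [← Set.not_nontrivial_iff]
    intro hs
    obtain rfl | hst := hst.eq_or_lt
    · exact hs.not_subsingleton (h.topChildren_subsingleton hθ hsl hNA hAC hICE2)
    obtain ⟨u, hu, hsu⟩ := exists_mem_topChildren_ge hθ hsl hNA hU
      (mem_topTree_of_topChildren_nonempty hθ hsl hNA hU hs.nonempty) hst
    have hu' := h.of_mem_topChildren hθ hsl hdc hsi hu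
      (topChildren_nonempty_of_le hθ hsl hNA hU hs.nonempty hsu)
    exact hs.not_subsingleton (ih u hu.2.1 hu' hsu)

theorem eq_of_topChildren_nontrivial_of_le [Finite P] (hθ : DynkinDatum θ) (hsl : SimplyLaced θ)
    (hdc : GColoredDComplete θ κ) (hsi : SlantIrreducible κ) {s u : P}
    (hs : (topChildren κ s).Nontrivial) (hu : (topChildren κ u).Nontrivial) (hsu : s ≤ u) :
    s = u := by
  have ⟨_, _, _, hNA, _, _, hU⟩ := hdc
  by_contra hne
  obtain ⟨v, hv, hsv⟩ := exists_mem_topChildren_ge hθ hsl hNA hU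
    (mem_topTree_of_topChildren_nonempty hθ hsl hNA hU hs.nonempty) (lt_of_le_of_ne hsu hne)
  have hv' := hasForeignNeighbor_of_topChildren_nontrivial hθ hsl hdc hsi hu hv
    (topChildren_nonempty_of_le hθ hsl hNA hU hs.nonempty hsv)
  exact hs.not_subsingleton (hv'.topChildren_subsingleton_of_le hθ hsl hdc hsi hsv)

theorem le_or_le_of_topChildren_nontrivial [Finite P] (hθ : DynkinDatum θ) (hsl : SimplyLaced θ)
    (hdc : GColoredDComplete θ κ) (hsi : SlantIrreducible κ) {s t : P}
    (hs : (topChildren κ s).Nontrivial) (ht : t ∈ TopTree κ) : s ≤ t ∨ t ≤ s := by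
  have ⟨_, _, _, hNA, _, _, hU⟩ := hdc
  have : Nonempty P := ⟨s⟩
  obtain ⟨m, hm⟩ := exists_forall_le hθ hsl hdc hsi.1
  by_contra! hst
  obtain ⟨u, hu⟩ := (Set.toFinite {w | s ≤ w ∧ t ≤ w}).exists_minimal ⟨m, hm s, hm t⟩
  have hsu : s < u := lt_of_le_of_ne hu.1.1 fun e => hst.2 (e ▸ hu.1.2)
  have htu : t < u := lt_of_le_of_ne hu.1.2 fun e => hst.1 (e ▸ hu.1.1)
  obtain ⟨a, ha, hsa⟩ := exists_mem_topChildren_ge hθ hsl hNA hU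
    (mem_topTree_of_topChildren_nonempty hθ hsl hNA hU hs.nonempty) hsu
  obtain ⟨b, hb, htb⟩ := exists_mem_topChildren_ge hθ hsl hNA hU ht htu
  have hab : a ≠ b := by
    rintro rfl
    exact hu.not_lt ⟨hsa, htb⟩ ha.2.1
  exact hsu.ne (eq_of_topChildren_nontrivial_of_le hθ hsl hdc hsi hs ⟨a, ha, b, hb, hab⟩ hsu.le)

theorem exists_topChildren_nontrivial [Finite P] (hθ : DynkinDatum θ) (hsl : SimplyLaced θ)
    (hdc : GColoredDComplete θ κ) (hsi : SlantIrreducible κ) (hnt : (TopTree κ).Nontrivial) :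
    ∃ s, (topChildren κ s).Nontrivial := by
  have ⟨_, hsur, hEC, hNA, hAC, _, hU⟩ := hdc
  have : Nonempty P := ⟨hnt.nonempty.some⟩
  obtain ⟨m, hm⟩ := exists_forall_le hθ hsl hdc hsi.1
  have hmT : m ∈ TopTree κ := fun y _ => not_lt_of_ge (hm y)
  obtain ⟨t, ht, htm⟩ := hnt.exists_ne m
  obtain ⟨c, hc, -⟩ := exists_mem_topChildren_ge hθ hsl hNA hU ht (lt_of_le_of_ne (hm t) htm)
  obtain ⟨p, hp⟩ := exists_colorConsecutive_of_mem_topChildren hθ hsl hEC hNA hU hsi hc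
  refine exists_topChildren_nontrivial_of_colors_subset hθ hsl hdc hp ?_
  rintro _ ⟨z, hz, rfl⟩
  obtain ⟨tz, htz, htzc⟩ := TopTree.exists_color_eq hsur (κ z)
  rcases TopTree.covBy_or_covBy_of_adj hθ hsl hNA hAC hU htz hmT (htzc ▸ hz.2) with h | h
  · exact ⟨tz, ⟨htz, h⟩, htzc⟩
  · exact absurd h.1 (not_lt_of_ge (hm tz))

theorem ncard_topChildren_eq_two [Finite P] (hθ : DynkinDatum θ) (hsl : SimplyLaced θ)
    (hdc : GColoredDComplete θ κ) (hsi : SlantIrreducible κ) {s : P}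
    (hs : (topChildren κ s).Nontrivial) : (topChildren κ s).ncard = 2 := by
  have ⟨_, _, hEC, hNA, hAC, hICE2, hU⟩ := hdc
  obtain ⟨c, hc⟩ := hs.nonempty
  obtain ⟨p, hp⟩ := exists_colorConsecutive_of_mem_topChildren hθ hsl hEC hNA hU hsi hc
  have hle : (topChildren κ s).ncard ≤ (adjBetween θ κ p s).ncard :=
    Set.ncard_le_ncard fun c hc => mem_adjBetween_of_covBy_right hθ hNA hAC hc.2 hp
  rw [ncard_adjBetween hθ hsl hICE2 hp] at hle
  have hgt := Set.one_lt_ncard_iff_nontrivial.mpr hs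
  omega

end

theorem splitting_element_general [PartialOrder P] [Fintype P]
    (θ : Γ → Γ → ℤ) (κ : P → Γ) (hθ : DynkinDatum θ) (hsl : SimplyLaced θ)
    (hdc : GColoredDComplete θ κ) (hsi : SlantIrreducible κ)
    (hnt : (TopTree κ).Nontrivial) :
    ∃ s ∈ TopTree κ, {x : P | CoversIn (TopTree κ) x s}.ncard = 2 ∧
      (∀ t ∈ TopTree κ, s ≤ t ∨ t ≤ s) ∧
      ∀ s' ∈ TopTree κ, 1 < {x : P | CoversIn (TopTree κ) x s'}.ncard → s' = s := by
  have ⟨_, _, _, hNA, _, _, hU⟩ := hdc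
  obtain ⟨s, hs⟩ := exists_topChildren_nontrivial hθ hsl hdc hsi hnt
  have hcomp : ∀ t ∈ TopTree κ, s ≤ t ∨ t ≤ s :=
    fun t ht => le_or_le_of_topChildren_nontrivial hθ hsl hdc hsi hs ht
  refine ⟨s, mem_topTree_of_topChildren_nonempty hθ hsl hNA hU hs.nonempty, ?_, hcomp, ?_⟩
  · rw [setOf_coversIn_topTree_eq hθ hsl hNA hU]
    exact ncard_topChildren_eq_two hθ hsl hdc hsi hs
  · intro s' hs' h
    rw [setOf_coversIn_topTree_eq hθ hsl hNA hU, Set.one_lt_ncard_iff_nontrivial] at h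
    rcases hcomp s' hs' with hss' | hs's
    · exact (eq_of_topChildren_nontrivial_of_le hθ hsl hdc hsi hs h hss').symm
    · exact eq_of_topChildren_nontrivial_of_le hθ hsl hdc hsi h hs hs's

/-- In a slant irreducible finite Γ-colored d-complete poset with Γ
simply laced whose top tree has more than one element, there is a unique element of
the top tree covering more than one element of the top tree; it covers exactly two
and is comparable to every element of the top tree. -/
theorem splitting_element [Fintype Γ] [PartialOrder P] [Fintype P] [Nonempty P]
    (θ : Γ → Γ → ℤ) (κ : P → Γ) (hθ : DynkinDatum θ) (hsl : SimplyLaced θ)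
    (hdc : GColoredDComplete θ κ) (hsi : SlantIrreducible κ)
    (hnt : (TopTree κ).Nontrivial) :
    ∃ s ∈ TopTree κ, {x : P | CoversIn (TopTree κ) x s}.ncard = 2 ∧
      (∀ t ∈ TopTree κ, s ≤ t ∨ t ≤ s) ∧
      ∀ s' ∈ TopTree κ, 1 < {x : P | CoversIn (TopTree κ) x s'}.ncard → s' = s :=
  splitting_element_general θ κ hθ hsl hdc hsi hnt
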